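/- arXiv:2512.16410 — 2 statements merged into one kernel-verified Lean document; each statement's English description precedes it below -/
import Mathlib

section
/- Let {(X_n, M_n, ·)}_{n∈ℕ} be a sequence of nonempty compact non-Archimedean fuzzy metric spaces with the product t-norm, satisfying: (1) there exists a nondecreasing left-continuous C : (0,∞) → (0,1] with 0 < C(s) ≤ diam_s(X_n) for all s > 0 and all n; (2) for every t > 0 and 0 < ε < 1 there exists N(ε,t) with cov(X_n,ε,t) ≤ N(ε,t) for all n; (3) for every t > 0 and 0 < ε < 1, with N = N(ε,t), there exists for each n a (t,ε)-net {x_i^n}_{i=1}^N in X_n such that for every n,m, all s > t and all i,j ∈ {1,…,N}, if M_n(x_i^n,x_j^n,s) < M_m(x_i^m,x_j^m,s) then M_n(x_i^n,x_j^n,s)/M_m(x_i^m,x_j^m,s) ≥ M_n(x_i^n,x_j^n,t)/M_m(x_i^m,x_j^m,t). Then for every t > 0 and 0 < ε < 1 there is a subsequence {X_{n_k}} with M_GH(X_{n_j}, X_{n_k}, t) > (1−ε)·(1−ε) for all j,k ∈ ℕ, and consequently the sequence has a Cauchy subsequence with respect to M_GH. -/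
set_option linter.unusedSectionVars false
set_option maxHeartbeats 1000000


open Set

/-- A continuous t-norm on `[0,1]`. -/
structure IsContinuousTNorm (star : ℝ → ℝ → ℝ) : Prop where
  mem : ∀ a ∈ Icc (0:ℝ) 1, ∀ b ∈ Icc (0:ℝ) 1, star a b ∈ Icc (0:ℝ) 1
  comm : ∀ a ∈ Icc (0:ℝ) 1, ∀ b ∈ Icc (0:ℝ) 1, star a b = star b a
  assoc : ∀ a ∈ Icc (0:ℝ) 1, ∀ b ∈ Icc (0:ℝ) 1, ∀ c ∈ Icc (0:ℝ) 1,
    star (star a b) c = star a (star b c)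
  one : ∀ a ∈ Icc (0:ℝ) 1, star a 1 = a
  mono : ∀ a b c d : ℝ, a ∈ Icc (0:ℝ) 1 → b ∈ Icc (0:ℝ) 1 → c ∈ Icc (0:ℝ) 1 →
    d ∈ Icc (0:ℝ) 1 → a ≤ c → b ≤ d → star a b ≤ star c d
  continuous : ContinuousOn (fun p : ℝ × ℝ => star p.1 p.2) (Icc 0 1 ×ˢ Icc 0 1)

/-- A fuzzy metric in the sense of Kramosil and Michalek: `M x y t` is the degree of
nearness of `x` and `y` at time `t ≥ 0`. -/
structure IsFuzzyMetric {X : Type*} (star : ℝ → ℝ → ℝ) (M : X → X → ℝ → ℝ) : Prop where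
  range : ∀ x y t, 0 ≤ t → M x y t ∈ Icc (0:ℝ) 1
  km1 : ∀ x y, M x y 0 = 0
  km2 : ∀ x y, (∀ t, 0 < t → M x y t = 1) ↔ x = y
  km3 : ∀ x y t, M x y t = M y x t
  km4 : ∀ x y z t s, 0 < t → 0 < s → star (M x y t) (M y z s) ≤ M x z (t + s)
  km5 : ∀ x y t, 0 < t → ContinuousWithinAt (M x y) (Iio t) t

/-- A non-Archimedean fuzzy metric: (KM4) is replaced by the stronger (NA). -/
structure IsNAFuzzyMetric {X : Type*} (star : ℝ → ℝ → ℝ) (M : X → X → ℝ → ℝ) : Prop where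
  range : ∀ x y t, 0 ≤ t → M x y t ∈ Icc (0:ℝ) 1
  km1 : ∀ x y, M x y 0 = 0
  km2 : ∀ x y, (∀ t, 0 < t → M x y t = 1) ↔ x = y
  km3 : ∀ x y t, M x y t = M y x t
  na : ∀ x y z t s, 0 < t → 0 < s → star (M x y t) (M y z s) ≤ M x z (max t s)
  km5 : ∀ x y t, 0 < t → ContinuousWithinAt (M x y) (Iio t) t

/-- The open ball `B_M(x, ε, t)`. -/
def fuzzyBall {X : Type*} (M : X → X → ℝ → ℝ) (x : X) (ε t : ℝ) : Set X :=
  {y | 1 - ε < M x y t}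

/-- The topology on `X` is the one induced by the fuzzy metric `M`, i.e. the open balls
form a neighbourhood basis at every point. -/
def FuzzyCompatible {X : Type*} [TopologicalSpace X] (M : X → X → ℝ → ℝ) : Prop :=
  ∀ x : X, (nhds x).HasBasis (fun p : ℝ × ℝ => 0 < p.1 ∧ p.1 < 1 ∧ 0 < p.2)
    (fun p => fuzzyBall M x p.1 p.2)

/-- The Hausdorff fuzzy distance between two subsets of a fuzzy metric space. -/
noncomputable def fuzzyHSet {X : Type*} (M : X → X → ℝ → ℝ) (A B : Set X) (t : ℝ) : ℝ :=
  min (⨅ a : A, ⨆ b : B, M a b t) (⨅ b : B, ⨆ a : A, M a b t)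

/-- The Hausdorff fuzzy distance between the two parts of a disjoint union `X ⊕ Y`. -/
noncomputable def fuzzyH {X Y : Type*} (M : (X ⊕ Y) → (X ⊕ Y) → ℝ → ℝ) (t : ℝ) : ℝ :=
  min (⨅ x : X, ⨆ y : Y, M (Sum.inl x) (Sum.inr y) t)
    (⨅ y : Y, ⨆ x : X, M (Sum.inl x) (Sum.inr y) t)

/-- A non-Archimedean fuzzy metric on the disjoint union `X ⊕ Y` is admissible if it
restricts to the given fuzzy metrics on `X` and on `Y`. -/
def IsAdmissible {X Y : Type*} (star : ℝ → ℝ → ℝ) (MX : X → X → ℝ → ℝ)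
    (MY : Y → Y → ℝ → ℝ) (M : (X ⊕ Y) → (X ⊕ Y) → ℝ → ℝ) : Prop :=
  IsNAFuzzyMetric star M ∧
    (∀ x x' t, 0 ≤ t → M (Sum.inl x) (Sum.inl x') t = MX x x' t) ∧
    (∀ y y' t, 0 ≤ t → M (Sum.inr y) (Sum.inr y') t = MY y y' t)

/-- The non-Archimedean Gromov-Hausdorff fuzzy distance. -/
noncomputable def MGH {X Y : Type*} (star : ℝ → ℝ → ℝ) (MX : X → X → ℝ → ℝ)
    (MY : Y → Y → ℝ → ℝ) (t : ℝ) : ℝ :=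
  sSup ((fun M => fuzzyH M t) '' {M | IsAdmissible star MX MY M})

/-- The `t`-diameter of a fuzzy metric space. -/
noncomputable def fuzzyDiam {X : Type*} (M : X → X → ℝ → ℝ) (s : ℝ) : ℝ :=
  ⨅ p : X × X, M p.1 p.2 s

/-- `cov(X, ε, t) ≤ N` : `X` can be covered by at most `N` balls `B(c, ε, t)`. -/
def CovLE {X : Type*} (M : X → X → ℝ → ℝ) (ε t : ℝ) (N : ℕ) : Prop :=
  ∃ C : Finset X, C.card ≤ N ∧ ∀ x : X, ∃ c ∈ C, 1 - ε < M c x t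

/-- Property (TN1) of a t-norm: `a - a ∗ b ≥ a ∗ (1 - b)`. -/
def TN1 (star : ℝ → ℝ → ℝ) : Prop :=
  ∀ a ∈ Icc (0:ℝ) 1, ∀ b ∈ Icc (0:ℝ) 1, star a (1 - b) ≤ a - star a b

/-- The standard fuzzy metric associated to a metric space. -/
noncomputable def stdFuzzy {X : Type*} [MetricSpace X] (x y : X) (t : ℝ) : ℝ :=
  if 0 < t then t / (t + dist x y) else 0

universe u

section basic
variable {X : Type*} {M : X → X → ℝ → ℝ}

lemma IsNAFuzzyMetric.self_eq_one (h : IsNAFuzzyMetric (fun a b : ℝ => a * b) M)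
    (x : X) {t : ℝ} (ht : 0 < t) : M x x t = 1 :=
  (h.km2 x x).mpr rfl t ht

lemma IsNAFuzzyMetric.mono (h : IsNAFuzzyMetric (fun a b : ℝ => a * b) M)
    (x y : X) {t s : ℝ} (ht : 0 < t) (hts : t ≤ s) : M x y t ≤ M x y s := by
  have hs : 0 < s := ht.trans_le hts
  have := h.na x y y t s ht hs
  rw [h.self_eq_one y hs] at this
  simpa [max_eq_right hts] using this

lemma IsNAFuzzyMetric.nonneg (h : IsNAFuzzyMetric (fun a b : ℝ => a * b) M)
    (x y : X) {t : ℝ} (ht : 0 ≤ t) : 0 ≤ M x y t := (h.range x y t ht).1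

lemma IsNAFuzzyMetric.le_one (h : IsNAFuzzyMetric (fun a b : ℝ => a * b) M)
    (x y : X) {t : ℝ} (ht : 0 ≤ t) : M x y t ≤ 1 := (h.range x y t ht).2
end basic

lemma cwa_sup' {ι : Type*} (s : Finset ι) (hs : s.Nonempty) (f : ι → ℝ → ℝ) {x : ℝ}
    {S : Set ℝ} (hf : ∀ i, ContinuousWithinAt (f i) S x) :
    ContinuousWithinAt (fun y => s.sup' hs fun i => f i y) S x := by
  induction hs using Finset.Nonempty.cons_induction with
  | singleton a => simpa using hf a
  | cons a s ha hs ih =>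
    show ContinuousWithinAt (fun y => (Finset.cons a s ha).sup' (Finset.cons_nonempty ha) fun i => f i y) S x
    have he : ∀ y : ℝ, ((Finset.cons a s ha).sup' (Finset.cons_nonempty ha) fun i => f i y)
        = f a y ⊔ (s.sup' hs fun i => f i y) := fun y => Finset.sup'_cons hs (fun i => f i y)
    simp only [he]
    exact (hf a).sup' ih

section gluedefs
variable {A B : Type*} (MA : A → A → ℝ → ℝ) (MB : B → B → ℝ → ℝ) {K : ℕ}
  (xa : Fin K → A) (xb : Fin K → B) (c t₀ : ℝ)

noncomputable def crossM [Nonempty (Fin K)] (p : A) (q : B) (s : ℝ) : ℝ :=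
  if t₀ < s then
    Finset.univ.sup' Finset.univ_nonempty (fun i => MA p (xa i) s * (c * MB (xb i) q s))
  else 0

noncomputable def glueM [Nonempty (Fin K)] (u v : A ⊕ B) (s : ℝ) : ℝ :=
  Sum.elim
    (fun p => Sum.elim (fun p' => MA p p' s) (fun q => crossM MA MB xa xb c t₀ p q s) v)
    (fun q => Sum.elim (fun p => crossM MA MB xa xb c t₀ p q s) (fun q' => MB q q' s) v) u
end gluedefs

section adm
variable {A B : Type*} {MA : A → A → ℝ → ℝ} {MB : B → B → ℝ → ℝ} {K : ℕ}
  {xa : Fin K → A} {xb : Fin K → B} {c t₀ : ℝ} [Nonempty (Fin K)]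
  (hA : IsNAFuzzyMetric (fun a b : ℝ => a * b) MA)
  (hB : IsNAFuzzyMetric (fun a b : ℝ => a * b) MB)
  (hc0 : 0 < c) (hc1 : c < 1) (ht₀ : 0 < t₀)

include hA hB hc0 hc1 ht₀

lemma cross_nonneg (p : A) (q : B) (s : ℝ) : 0 ≤ crossM MA MB xa xb c t₀ p q s := by
  rw [crossM]
  split_ifs with h
  · obtain ⟨i⟩ := ‹Nonempty (Fin K)›
    have hs : (0:ℝ) ≤ s := (ht₀.trans h).le
    refine le_trans ?_ (Finset.le_sup' _ (Finset.mem_univ i))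
    have h1 := hA.nonneg p (xa i) hs
    have h2 := hB.nonneg (xb i) q hs
    positivity
  · exact le_rfl

lemma cross_le_c (p : A) (q : B) (s : ℝ) : crossM MA MB xa xb c t₀ p q s ≤ c := by
  rw [crossM]
  split_ifs with h
  · apply Finset.sup'_le
    intro i _
    have hs : (0:ℝ) ≤ s := (ht₀.trans h).le
    have h1 := hA.le_one p (xa i) hs
    have h1' := hA.nonneg p (xa i) hs
    have h2 := hB.le_one (xb i) q hs
    have h2' := hB.nonneg (xb i) q hs
    have h3 : c * MB (xb i) q s ≤ c := by nlinarith
    nlinarith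
  · exact hc0.le

lemma cross_lemma1 (p p' : A) (q : B) (t1 s : ℝ) (ht1 : 0 < t1) (hs : 0 < s) :
    MA p p' t1 * crossM MA MB xa xb c t₀ p' q s ≤ crossM MA MB xa xb c t₀ p q (max t1 s) := by
  by_cases hts : t₀ < s
  · have hσ : t₀ < max t1 s := hts.trans_le (le_max_right _ _)
    have hσ0 : (0:ℝ) < max t1 s := ht₀.trans hσ
    rw [crossM, crossM, if_pos hts, if_pos hσ]
    obtain ⟨i, -, hi⟩ := Finset.exists_mem_eq_sup' Finset.univ_nonempty
      (fun i => MA p' (xa i) s * (c * MB (xb i) q s))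
    rw [hi]
    refine le_trans ?_ (Finset.le_sup' _ (Finset.mem_univ i))
    have e1 : MA p p' t1 * MA p' (xa i) s ≤ MA p (xa i) (max t1 s) := hA.na p p' (xa i) t1 s ht1 hs
    have e2 : MB (xb i) q s ≤ MB (xb i) q (max t1 s) := hB.mono _ _ hs (le_max_right _ _)
    have n1 := hA.nonneg p p' ht1.le
    have n2 := hA.nonneg p' (xa i) hs.le
    have n3 := hB.nonneg (xb i) q hs.le
    have n4 := hA.nonneg p (xa i) hσ0.le
    calc MA p p' t1 * (MA p' (xa i) s * (c * MB (xb i) q s))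
        = (MA p p' t1 * MA p' (xa i) s) * (c * MB (xb i) q s) := by ring
      _ ≤ MA p (xa i) (max t1 s) * (c * MB (xb i) q (max t1 s)) := by
          apply mul_le_mul e1 (by nlinarith) (by positivity) n4
      _ = _ := rfl
  · rw [crossM, if_neg hts, mul_zero]
    exact cross_nonneg hA hB hc0 hc1 ht₀ p q _

lemma cross_lemma3 (p : A) (q q' : B) (t1 s : ℝ) (ht1 : 0 < t1) (hs : 0 < s) :
    crossM MA MB xa xb c t₀ p q t1 * MB q q' s ≤ crossM MA MB xa xb c t₀ p q' (max t1 s) := by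
  by_cases htt : t₀ < t1
  · have hσ : t₀ < max t1 s := htt.trans_le (le_max_left _ _)
    have hσ0 : (0:ℝ) < max t1 s := ht₀.trans hσ
    rw [crossM, crossM, if_pos htt, if_pos hσ]
    obtain ⟨i, -, hi⟩ := Finset.exists_mem_eq_sup' Finset.univ_nonempty
      (fun i => MA p (xa i) t1 * (c * MB (xb i) q t1))
    rw [hi]
    refine le_trans ?_ (Finset.le_sup' _ (Finset.mem_univ i))
    have e1 : MB (xb i) q t1 * MB q q' s ≤ MB (xb i) q' (max t1 s) := hB.na (xb i) q q' t1 s ht1 hs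
    have e2 : MA p (xa i) t1 ≤ MA p (xa i) (max t1 s) := hA.mono _ _ ht1 (le_max_left _ _)
    have n1 := hA.nonneg p (xa i) ht1.le
    have n2 := hB.nonneg (xb i) q ht1.le
    have n3 := hB.nonneg q q' hs.le
    have n4 := hB.nonneg (xb i) q' hσ0.le
    calc MA p (xa i) t1 * (c * MB (xb i) q t1) * MB q q' s
        = MA p (xa i) t1 * (c * (MB (xb i) q t1 * MB q q' s)) := by ring
      _ ≤ MA p (xa i) (max t1 s) * (c * MB (xb i) q' (max t1 s)) := by
          apply mul_le_mul e2 (by nlinarith) (by positivity) (by nlinarith [hA.le_one p (xa i) hσ0.le])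
  · rw [crossM, if_neg htt, zero_mul]
    exact cross_nonneg hA hB hc0 hc1 ht₀ p q' _

lemma cross_lemma2
    (hAB : ∀ s, t₀ < s → ∀ i j, c * c * MB (xb i) (xb j) s ≤ MA (xa i) (xa j) s)
    (p p' : A) (q : B) (t1 s : ℝ) (ht1 : 0 < t1) (hs : 0 < s) :
    crossM MA MB xa xb c t₀ p q t1 * crossM MA MB xa xb c t₀ p' q s ≤ MA p p' (max t1 s) := by
  have hσ0 : (0:ℝ) < max t1 s := lt_max_of_lt_left ht1
  by_cases htt : t₀ < t1
  · by_cases hts : t₀ < s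
    · have hσ : t₀ < max t1 s := htt.trans_le (le_max_left _ _)
      rw [crossM, crossM, if_pos htt, if_pos hts]
      obtain ⟨i, -, hi⟩ := Finset.exists_mem_eq_sup' Finset.univ_nonempty
        (fun i => MA p (xa i) t1 * (c * MB (xb i) q t1))
      obtain ⟨j, -, hj⟩ := Finset.exists_mem_eq_sup' Finset.univ_nonempty
        (fun i => MA p' (xa i) s * (c * MB (xb i) q s))
      rw [hi, hj]
      set σ := max t1 s with hσdef
      have e1 : MB (xb i) q t1 * MB q (xb j) s ≤ MB (xb i) (xb j) σ := hB.na _ q _ t1 s ht1 hs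
      rw [← hB.km3 (xb j) q s] at e1
      have e2 : c * c * MB (xb i) (xb j) σ ≤ MA (xa i) (xa j) σ := hAB σ hσ i j
      have e3 : MA (xa i) (xa j) σ * MA (xa j) p' s ≤ MA (xa i) p' σ := by
        have := hA.na (xa i) (xa j) p' σ s hσ0 hs
        rwa [max_eq_left (le_max_right t1 s)] at this
      have e4 : MA p (xa i) t1 * MA (xa i) p' σ ≤ MA p p' σ := by
        have := hA.na p (xa i) p' t1 σ ht1 hσ0
        rwa [max_eq_right (le_max_left t1 s)] at this
      have n1 := hA.nonneg p (xa i) ht1.le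
      have n2 := hB.nonneg (xb i) q ht1.le
      have n3 := hA.nonneg p' (xa j) hs.le
      have n4 := hB.nonneg (xb j) q hs.le
      have n5 := hA.nonneg p (xa i) hσ0.le
      have n6 := hA.nonneg (xa i) (xa j) hσ0.le
      have n7 := hA.nonneg (xa j) p' hs.le
      have e5 : (c * c) * (MB (xb i) q t1 * MB (xb j) q s) ≤ MA (xa i) (xa j) σ :=
        le_trans (by nlinarith) e2
      calc MA p (xa i) t1 * (c * MB (xb i) q t1) * (MA p' (xa j) s * (c * MB (xb j) q s))
          = MA p (xa i) t1 * ((c * c) * (MB (xb i) q t1 * MB (xb j) q s)) * MA p' (xa j) s := by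
            ring
        _ ≤ MA p (xa i) t1 * MA (xa i) (xa j) σ * MA p' (xa j) s := by
            apply mul_le_mul_of_nonneg_right (mul_le_mul_of_nonneg_left e5 n1) n3
        _ = MA p (xa i) t1 * (MA (xa i) (xa j) σ * MA (xa j) p' s) := by
            rw [hA.km3 p' (xa j) s]; ring
        _ ≤ MA p (xa i) t1 * MA (xa i) p' σ := mul_le_mul_of_nonneg_left e3 n1
        _ ≤ MA p p' σ := e4
    · have h0 : crossM MA MB xa xb c t₀ p' q s = 0 := if_neg hts
      rw [h0, mul_zero]
      exact hA.nonneg p p' hσ0.le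
  · have h0 : crossM MA MB xa xb c t₀ p q t1 = 0 := if_neg htt
    rw [h0, zero_mul]
    exact hA.nonneg p p' hσ0.le

lemma cross_lemma4
    (hBA : ∀ s, t₀ < s → ∀ i j, c * c * MA (xa i) (xa j) s ≤ MB (xb i) (xb j) s)
    (p : A) (q q' : B) (t1 s : ℝ) (ht1 : 0 < t1) (hs : 0 < s) :
    crossM MA MB xa xb c t₀ p q t1 * crossM MA MB xa xb c t₀ p q' s ≤ MB q q' (max t1 s) := by
  have hσ0 : (0:ℝ) < max t1 s := lt_max_of_lt_left ht1
  by_cases htt : t₀ < t1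
  · by_cases hts : t₀ < s
    · have hσ : t₀ < max t1 s := htt.trans_le (le_max_left _ _)
      rw [crossM, crossM, if_pos htt, if_pos hts]
      obtain ⟨i, -, hi⟩ := Finset.exists_mem_eq_sup' Finset.univ_nonempty
        (fun i => MA p (xa i) t1 * (c * MB (xb i) q t1))
      obtain ⟨j, -, hj⟩ := Finset.exists_mem_eq_sup' Finset.univ_nonempty
        (fun i => MA p (xa i) s * (c * MB (xb i) q' s))
      rw [hi, hj]
      set σ := max t1 s with hσdef
      have e1 : MA (xa i) p t1 * MA p (xa j) s ≤ MA (xa i) (xa j) σ := hA.na _ p _ t1 s ht1 hs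
      rw [← hA.km3 p (xa i) t1] at e1
      have e2 : c * c * MA (xa i) (xa j) σ ≤ MB (xb i) (xb j) σ := hBA σ hσ i j
      have e3 : MB (xb i) (xb j) σ * MB (xb j) q' s ≤ MB (xb i) q' σ := by
        have := hB.na (xb i) (xb j) q' σ s hσ0 hs
        rwa [max_eq_left (le_max_right t1 s)] at this
      have e4 : MB q (xb i) t1 * MB (xb i) q' σ ≤ MB q q' σ := by
        have := hB.na q (xb i) q' t1 σ ht1 hσ0
        rwa [max_eq_right (le_max_left t1 s)] at this
      have n1 := hB.nonneg (xb i) q ht1.le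
      have n2 := hA.nonneg p (xa i) ht1.le
      have n3 := hB.nonneg (xb j) q' hs.le
      have n4 := hA.nonneg p (xa j) hs.le
      have n5 := hB.nonneg (xb i) (xb j) hσ0.le
      have e5 : (c * c) * (MA p (xa i) t1 * MA p (xa j) s) ≤ MB (xb i) (xb j) σ :=
        le_trans (by nlinarith) e2
      calc MA p (xa i) t1 * (c * MB (xb i) q t1) * (MA p (xa j) s * (c * MB (xb j) q' s))
          = MB (xb i) q t1 * ((c * c) * (MA p (xa i) t1 * MA p (xa j) s)) * MB (xb j) q' s := by
            ring
        _ ≤ MB (xb i) q t1 * MB (xb i) (xb j) σ * MB (xb j) q' s := by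
            apply mul_le_mul_of_nonneg_right (mul_le_mul_of_nonneg_left e5 n1) n3
        _ = MB q (xb i) t1 * (MB (xb i) (xb j) σ * MB (xb j) q' s) := by
            rw [hB.km3 q (xb i) t1]; ring
        _ ≤ MB q (xb i) t1 * MB (xb i) q' σ := by
            apply mul_le_mul_of_nonneg_left e3 (by rw [hB.km3]; exact n1)
        _ ≤ MB q q' σ := e4
    · have h0 : crossM MA MB xa xb c t₀ p q' s = 0 := if_neg hts
      rw [h0, mul_zero]
      exact hB.nonneg q q' hσ0.le
  · have h0 : crossM MA MB xa xb c t₀ p q t1 = 0 := if_neg htt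
    rw [h0, zero_mul]
    exact hB.nonneg q q' hσ0.le

lemma cross_km5 (p : A) (q : B) (s₀ : ℝ) (hs₀ : 0 < s₀) :
    ContinuousWithinAt (fun s => crossM MA MB xa xb c t₀ p q s) (Iio s₀) s₀ := by
  rcases le_or_gt s₀ t₀ with h | h
  · refine (continuousWithinAt_const : ContinuousWithinAt (fun _ => (0:ℝ)) (Iio s₀) s₀).congr (fun y hy => ?_) ?_
    · exact if_neg (by simp only [mem_Iio] at hy; linarith)
    · exact if_neg (by linarith)
  · have hF : ContinuousWithinAt
        (fun s => Finset.univ.sup' Finset.univ_nonempty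
          (fun i => MA p (xa i) s * (c * MB (xb i) q s))) (Iio s₀) s₀ := by
      apply cwa_sup'
      intro i
      exact (hA.km5 p (xa i) s₀ hs₀).mul (continuousWithinAt_const.mul (hB.km5 (xb i) q s₀ hs₀))
    refine hF.congr_of_eventuallyEq ?_ (if_pos h)
    have hmem : Ioi t₀ ∈ nhdsWithin s₀ (Iio s₀) :=
      nhdsWithin_le_nhds (isOpen_Ioi.mem_nhds h)
    filter_upwards [hmem] with y hy
    exact if_pos hy

lemma glue_admissible
    (hAB : ∀ s, t₀ < s → ∀ i j, c * c * MB (xb i) (xb j) s ≤ MA (xa i) (xa j) s)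
    (hBA : ∀ s, t₀ < s → ∀ i j, c * c * MA (xa i) (xa j) s ≤ MB (xb i) (xb j) s) :
    IsAdmissible (fun a b : ℝ => a * b) MA MB (glueM MA MB xa xb c t₀) := by
  refine ⟨⟨?_, ?_, ?_, ?_, ?_, ?_⟩, fun x x' t ht => rfl, fun y y' t ht => rfl⟩
  · -- range
    rintro (p | q) (p' | q') t ht
    · exact hA.range p p' t ht
    · exact ⟨cross_nonneg hA hB hc0 hc1 ht₀ _ _ _,
        (cross_le_c hA hB hc0 hc1 ht₀ _ _ _).trans hc1.le⟩
    · exact ⟨cross_nonneg hA hB hc0 hc1 ht₀ _ _ _,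
        (cross_le_c hA hB hc0 hc1 ht₀ _ _ _).trans hc1.le⟩
    · exact hB.range q q' t ht
  · -- km1
    rintro (p | q) (p' | q')
    · exact hA.km1 p p'
    · show crossM MA MB xa xb c t₀ p q' 0 = 0
      exact if_neg (by linarith)
    · show crossM MA MB xa xb c t₀ p' q 0 = 0
      exact if_neg (by linarith)
    · exact hB.km1 q q'
  · -- km2
    have cross_ne : ∀ (p : A) (q : B), ¬ (∀ t : ℝ, 0 < t → crossM MA MB xa xb c t₀ p q t = 1) := by
      intro p q h
      have h1 := h (t₀ + 1) (by linarith)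
      have h2 := cross_le_c (xa := xa) (xb := xb) hA hB hc0 hc1 ht₀ p q (t₀ + 1)
      rw [h1] at h2
      linarith
    rintro (p | q) (p' | q')
    · constructor
      · intro h
        have := (hA.km2 p p').mp h
        rw [this]
      · intro h t ht
        obtain rfl : p = p' := by simpa using h
        exact hA.self_eq_one p ht
    · exact ⟨fun h => absurd h (cross_ne p q'), fun h => absurd h (by simp)⟩
    · exact ⟨fun h => absurd h (cross_ne p' q), fun h => absurd h (by simp)⟩
    · constructor
      · intro h
        have := (hB.km2 q q').mp h
        rw [this]
      · intro h t ht
        obtain rfl : q = q' := by simpa using h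
        exact hB.self_eq_one q ht
  · -- km3
    rintro (p | q) (p' | q') t
    · exact hA.km3 p p' t
    · rfl
    · rfl
    · exact hB.km3 q q' t
  · -- na
    rintro (p | q) (p' | q') (p'' | q'') t1 s ht1 hs
    · exact hA.na p p' p'' t1 s ht1 hs
    · exact cross_lemma1 hA hB hc0 hc1 ht₀ p p' q'' t1 s ht1 hs
    · exact cross_lemma2 hA hB hc0 hc1 ht₀ hAB p p'' q' t1 s ht1 hs
    · exact cross_lemma3 hA hB hc0 hc1 ht₀ p q' q'' t1 s ht1 hs
    · show crossM MA MB xa xb c t₀ p' q t1 * MA p' p'' s ≤ crossM MA MB xa xb c t₀ p'' q (max t1 s)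
      have := cross_lemma1 (xa := xa) (xb := xb) hA hB hc0 hc1 ht₀ p'' p' q s t1 hs ht1
      rw [max_comm s t1] at this
      rw [mul_comm, ← hA.km3 p'' p' s]
      exact this
    · exact cross_lemma4 hA hB hc0 hc1 ht₀ hBA p' q q'' t1 s ht1 hs
    · show MB q q' t1 * crossM MA MB xa xb c t₀ p'' q' s ≤ crossM MA MB xa xb c t₀ p'' q (max t1 s)
      have := cross_lemma3 (xa := xa) (xb := xb) hA hB hc0 hc1 ht₀ p'' q' q s t1 hs ht1
      rw [max_comm s t1] at this
      rw [mul_comm, hB.km3 q q' t1]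
      exact this
    · exact hB.na q q' q'' t1 s ht1 hs
  · -- km5
    rintro (p | q) (p' | q') t ht
    · exact hA.km5 p p' t ht
    · exact cross_km5 hA hB hc0 hc1 ht₀ p q' t ht
    · exact cross_km5 hA hB hc0 hc1 ht₀ p' q t ht
    · exact hB.km5 q q' t ht

lemma glue_fuzzyH [Nonempty A] [Nonempty B] {t ε : ℝ} (ht0t : t₀ < t) (hε1 : ε < 1)
    (hcε : 1 - ε < c)
    (hnetA : ∀ p : A, ∃ i, 1 - ε < MA p (xa i) t)
    (hnetB : ∀ q : B, ∃ i, 1 - ε < MB q (xb i) t) :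
    (1 - ε) * (1 - ε) < fuzzyH (glueM MA MB xa xb c t₀) t := by
  have ht : 0 < t := ht₀.trans ht0t
  have hε0 : 0 < 1 - ε := by linarith
  have key : (1 - ε) * (1 - ε) < (1 - ε) * c := by nlinarith
  have bddB : ∀ p : A, BddAbove (Set.range fun q : B => glueM MA MB xa xb c t₀ (Sum.inl p) (Sum.inr q) t) := by
    intro p
    refine ⟨1, ?_⟩
    rintro v ⟨q, rfl⟩
    exact (cross_le_c hA hB hc0 hc1 ht₀ p q t).trans hc1.le
  have bddA : ∀ q : B, BddAbove (Set.range fun p : A => glueM MA MB xa xb c t₀ (Sum.inl p) (Sum.inr q) t) := by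
    intro q
    refine ⟨1, ?_⟩
    rintro v ⟨p, rfl⟩
    exact (cross_le_c hA hB hc0 hc1 ht₀ p q t).trans hc1.le
  refine lt_min (lt_of_lt_of_le key (le_ciInf fun p => ?_)) (lt_of_lt_of_le key (le_ciInf fun q => ?_))
  · obtain ⟨i, hi⟩ := hnetA p
    refine le_trans ?_ (le_ciSup (bddB p) (xb i))
    show (1 - ε) * c ≤ crossM MA MB xa xb c t₀ p (xb i) t
    have h1 : crossM MA MB xa xb c t₀ p (xb i) t = if t₀ < t then _ else 0 := rfl
    rw [crossM, if_pos ht0t]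
    refine le_trans ?_ (Finset.le_sup' _ (Finset.mem_univ i))
    rw [hB.self_eq_one (xb i) ht]
    nlinarith
  · obtain ⟨i, hi⟩ := hnetB q
    refine le_trans ?_ (le_ciSup (bddA q) (xa i))
    show (1 - ε) * c ≤ crossM MA MB xa xb c t₀ (xa i) q t
    rw [crossM, if_pos ht0t]
    refine le_trans ?_ (Finset.le_sup' _ (Finset.mem_univ i))
    rw [hA.self_eq_one (xa i) ht, hB.km3 (xb i) q t]
    nlinarith
end adm

section mgh
variable {X Y : Type*} [Nonempty X] [Nonempty Y] {MX : X → X → ℝ → ℝ} {MY : Y → Y → ℝ → ℝ}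

lemma fuzzyH_le_one {M : (X ⊕ Y) → (X ⊕ Y) → ℝ → ℝ}
    (hM : IsAdmissible (fun a b : ℝ => a * b) MX MY M) {t : ℝ} (ht : 0 < t) :
    fuzzyH M t ≤ 1 := by
  have hNA := hM.1
  refine le_trans (min_le_left _ _) ?_
  have x0 : X := Classical.arbitrary X
  have hbdd : BddBelow (Set.range fun x : X => ⨆ y : Y, M (Sum.inl x) (Sum.inr y) t) := by
    refine ⟨0, ?_⟩
    rintro v ⟨x, rfl⟩
    refine le_trans (hNA.nonneg (Sum.inl x) (Sum.inr (Classical.arbitrary Y)) ht.le) ?_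
    apply le_ciSup (f := fun y : Y => M (Sum.inl x) (Sum.inr y) t)
    exact ⟨1, by rintro v ⟨y, rfl⟩; exact hNA.le_one _ _ ht.le⟩
  refine le_trans (ciInf_le hbdd x0) ?_
  exact ciSup_le fun y => hNA.le_one _ _ ht.le

lemma le_MGH {M : (X ⊕ Y) → (X ⊕ Y) → ℝ → ℝ}
    (hM : IsAdmissible (fun a b : ℝ => a * b) MX MY M) {t : ℝ} (ht : 0 < t) :
    fuzzyH M t ≤ MGH (fun a b : ℝ => a * b) MX MY t := by
  apply le_csSup
  · refine ⟨1, ?_⟩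
    rintro v ⟨M', hM', rfl⟩
    exact fuzzyH_le_one hM' ht
  · exact ⟨M, hM, rfl⟩

lemma MGH_mono {t t' : ℝ} (ht : 0 < t) (htt' : t ≤ t') :
    MGH (fun a b : ℝ => a * b) MX MY t ≤ MGH (fun a b : ℝ => a * b) MX MY t' := by
  rcases Set.eq_empty_or_nonempty {M | IsAdmissible (fun a b : ℝ => a * b) MX MY M} with h | h
  · simp [MGH, h, Real.sSup_empty]
  · apply csSup_le (h.image _)
    rintro v ⟨M, hM, rfl⟩
    have hNA := hM.1
    have ht' : 0 < t' := ht.trans_le htt'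
    have hb1 : ∀ (x : X) (τ : ℝ), 0 < τ → BddAbove (Set.range fun y : Y => M (Sum.inl x) (Sum.inr y) τ) :=
      fun x τ hτ => ⟨1, by rintro v ⟨y, rfl⟩; exact hNA.le_one _ _ hτ.le⟩
    have hb2 : ∀ (y : Y) (τ : ℝ), 0 < τ → BddAbove (Set.range fun x : X => M (Sum.inl x) (Sum.inr y) τ) :=
      fun y τ hτ => ⟨1, by rintro v ⟨x, rfl⟩; exact hNA.le_one _ _ hτ.le⟩
    have hfh : fuzzyH M t ≤ fuzzyH M t' := by
      apply min_le_min
      · refine le_ciInf fun x => ?_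
        have hbdd : BddBelow (Set.range fun x : X => ⨆ y : Y, M (Sum.inl x) (Sum.inr y) t) := by
          refine ⟨0, ?_⟩
          rintro v ⟨x', rfl⟩
          exact le_trans (hNA.nonneg (Sum.inl x') (Sum.inr (Classical.arbitrary Y)) ht.le)
            (le_ciSup (hb1 x' t ht) _)
        refine le_trans (ciInf_le hbdd x) ?_
        exact ciSup_le fun y => le_trans (hNA.mono _ _ ht htt') (le_ciSup (hb1 x t' ht') y)
      · refine le_ciInf fun y => ?_
        have hbdd : BddBelow (Set.range fun y : Y => ⨆ x : X, M (Sum.inl x) (Sum.inr y) t) := by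
          refine ⟨0, ?_⟩
          rintro v ⟨y', rfl⟩
          exact le_trans (hNA.nonneg (Sum.inl (Classical.arbitrary X)) (Sum.inr y') ht.le)
            (le_ciSup (hb2 y' t ht) _)
        refine le_trans (ciInf_le hbdd y) ?_
        exact ciSup_le fun x => le_trans (hNA.mono _ _ ht htt') (le_ciSup (hb2 y t' ht') x)
    refine hfh.trans (le_csSup ?_ ⟨M, hM, rfl⟩)
    refine ⟨1, ?_⟩
    rintro v ⟨M', hM', rfl⟩
    exact fuzzyH_le_one hM' ht'
end mgh

universe v

lemma key_lemma (X : ℕ → Type v) [inst : ∀ n, Nonempty (X n)]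
    (M : ∀ n, X n → X n → ℝ → ℝ)
    (hM : ∀ n, IsNAFuzzyMetric (fun a b : ℝ => a * b) (M n))
    (C : ℝ → ℝ)
    (hC : ∀ s, 0 < s → 0 < C s ∧ C s ≤ 1 ∧ ∀ n, C s ≤ fuzzyDiam (M n) s)
    (N : ℝ → ℝ → ℕ)
    (hnets : ∀ t ε : ℝ, 0 < t → 0 < ε → ε < 1 →
      ∃ x : ∀ n, Fin (N ε t) → X n,
        (∀ n, ∀ p : X n, ∃ i, 1 - ε < M n p (x n i) t) ∧
        (∀ n m, ∀ s, t < s → ∀ i j,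
          M n (x n i) (x n j) s < M m (x m i) (x m j) s →
          M n (x n i) (x n j) t / M m (x m i) (x m j) t ≤
            M n (x n i) (x n j) s / M m (x m i) (x m j) s))
    (t ε : ℝ) (ht : 0 < t) (hε : 0 < ε) (hε1 : ε < 1) (g : ℕ → ℕ) :
    ∃ φ : ℕ → ℕ, StrictMono φ ∧
      ∀ j k, (1 - ε) * (1 - ε) < MGH (fun a b : ℝ => a * b) (M (g (φ j))) (M (g (φ k))) t := by
  have ht₀ : 0 < t / 2 := by linarith
  have ht₀t : t / 2 < t := by linarith
  set t₀ := t / 2 with ht₀def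
  obtain ⟨x, hxnet, hxratio⟩ := hnets t₀ ε ht₀ hε hε1
  haveI hKne : Nonempty (Fin (N ε t₀)) := ⟨(hxnet 0 (Classical.arbitrary _)).choose⟩
  -- lower bound on M at net points
  have hdiam : ∀ (n : ℕ) (a b : X n) (s : ℝ), 0 < s → C s ≤ M n a b s := by
    intro n a b s hs
    refine le_trans ((hC s hs).2.2 n) ?_
    refine ciInf_le ⟨0, ?_⟩ (a, b)
    rintro v ⟨p, rfl⟩
    exact (hM n).nonneg _ _ hs.le
  -- constants
  set r := (1 + (1 - ε) * (1 - ε)) / 2 with hrdef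
  have hr1 : r < 1 := by nlinarith
  have hrε : (1 - ε) * (1 - ε) < r := by nlinarith
  have hr0 : 0 < r := by nlinarith
  set c := Real.sqrt r with hcdef
  have hc2 : c * c = r := Real.mul_self_sqrt hr0.le
  have hc0 : 0 < c := Real.sqrt_pos.mpr hr0
  have hc1 : c < 1 := by nlinarith [sq_nonneg (c - 1)]
  have hcε : 1 - ε < c := by nlinarith [sq_nonneg (1 - ε - c)]
  have hCpos : 0 < C t₀ := (hC t₀ ht₀).1
  set η := C t₀ * (1 - r) with hηdef
  have hη : 0 < η := mul_pos hCpos (by linarith)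
  -- subsequence via compactness
  set u : ℕ → (Fin (N ε t₀) × Fin (N ε t₀)) → ℝ := fun n ij => M (g n) (x (g n) ij.1) (x (g n) ij.2) t₀ with hudef
  have hu : ∀ n, u n ∈ Set.pi Set.univ (fun _ : Fin (N ε t₀) × Fin (N ε t₀) => Icc (0:ℝ) 1) := by
    intro n ij _
    exact (hM (g n)).range _ _ _ ht₀.le
  obtain ⟨L, -, φ₀, hφ₀, hconv⟩ :=
    (isCompact_univ_pi (fun _ : Fin (N ε t₀) × Fin (N ε t₀) => isCompact_Icc)).tendsto_subseq hu
  rw [Metric.tendsto_atTop] at hconv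
  obtain ⟨K0, hK0⟩ := hconv (η / 2) (by linarith)
  set φ : ℕ → ℕ := fun j => φ₀ (j + K0) with hφdef
  have hφ : StrictMono φ := hφ₀.comp (fun a b h => by omega)
  have hclose : ∀ j k (ij : Fin (N ε t₀) × Fin (N ε t₀)), |u (φ j) ij - u (φ k) ij| ≤ η := by
    intro j k ij
    have h1 : dist (u (φ j)) L < η / 2 := hK0 (j + K0) (by omega)
    have h2 : dist (u (φ k)) L < η / 2 := hK0 (k + K0) (by omega)
    have e1 : dist (u (φ j) ij) (L ij) < η / 2 := lt_of_le_of_lt (dist_le_pi_dist _ _ _) h1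
    have e2 : dist (u (φ k) ij) (L ij) < η / 2 := lt_of_le_of_lt (dist_le_pi_dist _ _ _) h2
    rw [← Real.dist_eq]
    refine le_of_lt (lt_of_le_of_lt (dist_triangle _ (L ij) _) ?_)
    rw [dist_comm (L ij)]
    linarith
  -- ratio bounds
  have hABcore : ∀ (n m : ℕ), (∀ ij : Fin (N ε t₀) × Fin (N ε t₀),
        |M (g n) (x (g n) ij.1) (x (g n) ij.2) t₀ - M (g m) (x (g m) ij.1) (x (g m) ij.2) t₀| ≤ η) →
      ∀ s, t₀ < s → ∀ i i' : Fin (N ε t₀),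
        c * c * M (g m) (x (g m) i) (x (g m) i') s ≤ M (g n) (x (g n) i) (x (g n) i') s := by
    intro n m hcl s hs i i'
    have hs0 : 0 < s := ht₀.trans hs
    have ha₀ : C t₀ ≤ M (g n) (x (g n) i) (x (g n) i') t₀ := hdiam _ _ _ _ ht₀
    have hb₀ : C t₀ ≤ M (g m) (x (g m) i) (x (g m) i') t₀ := hdiam _ _ _ _ ht₀
    have hb₀1 : M (g m) (x (g m) i) (x (g m) i') t₀ ≤ 1 := (hM (g m)).le_one _ _ ht₀.le
    have habs := abs_le.mp (hcl (i, i'))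
    have hbs0 : 0 < M (g m) (x (g m) i) (x (g m) i') s :=
      lt_of_lt_of_le (hC s hs0).1 (hdiam _ _ _ _ hs0)
    have hbt0 : 0 < M (g m) (x (g m) i) (x (g m) i') t₀ := hCpos.trans_le hb₀
    have hrb : r * M (g m) (x (g m) i) (x (g m) i') t₀ ≤ M (g n) (x (g n) i) (x (g n) i') t₀ := by
      simp only at habs
      nlinarith [habs.1, habs.2]
    rw [hc2]
    by_cases hlt : M (g n) (x (g n) i) (x (g n) i') s < M (g m) (x (g m) i) (x (g m) i') s
    · have hratio := hxratio (g n) (g m) s hs i i' hlt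
      have h1 : r ≤ M (g n) (x (g n) i) (x (g n) i') t₀ / M (g m) (x (g m) i) (x (g m) i') t₀ :=
        (le_div_iff₀ hbt0).mpr hrb
      have h2 : r ≤ M (g n) (x (g n) i) (x (g n) i') s / M (g m) (x (g m) i) (x (g m) i') s :=
        h1.trans hratio
      exact (le_div_iff₀ hbs0).mp h2
    · push_neg at hlt
      nlinarith
  refine ⟨φ, hφ, fun j k => ?_⟩
  have hAB := hABcore (φ j) (φ k) (fun ij => hclose j k ij)
  have hBA := hABcore (φ k) (φ j) (fun ij => by rw [abs_sub_comm]; exact hclose j k ij)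
  have hadm := glue_admissible (xa := x (g (φ j))) (xb := x (g (φ k)))
    (hM (g (φ j))) (hM (g (φ k))) hc0 hc1 ht₀ hAB hBA
  have hnetA : ∀ p : X (g (φ j)), ∃ i, 1 - ε < M (g (φ j)) p (x (g (φ j)) i) t := by
    intro p
    obtain ⟨i, hi⟩ := hxnet (g (φ j)) p
    exact ⟨i, hi.trans_le ((hM _).mono _ _ ht₀ ht₀t.le)⟩
  have hnetB : ∀ q : X (g (φ k)), ∃ i, 1 - ε < M (g (φ k)) q (x (g (φ k)) i) t := by
    intro q
    obtain ⟨i, hi⟩ := hxnet (g (φ k)) q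
    exact ⟨i, hi.trans_le ((hM _).mono _ _ ht₀ ht₀t.le)⟩
  have hH := glue_fuzzyH (hM (g (φ j))) (hM (g (φ k))) hc0 hc1 ht₀ ht₀t hε1 hcε hnetA hnetB
  exact hH.trans_le (le_MGH hadm ht)


/-- Theorem `th:main2`: for the product t-norm, conditions (1)-(3) give,
for every `t > 0` and `0 < ε < 1`, a subsequence pairwise `(1-ε)·(1-ε)`-close in the
Gromov-Hausdorff fuzzy distance, and consequently a Cauchy subsequence. -/
theorem fuzzy_precompactness_prod
    (X : ℕ → Type u) [∀ n, TopologicalSpace (X n)] [∀ n, CompactSpace (X n)]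
    [∀ n, Nonempty (X n)]
    (M : ∀ n, X n → X n → ℝ → ℝ)
    (hM : ∀ n, IsNAFuzzyMetric (fun a b : ℝ => a * b) (M n))
    (hcomp : ∀ n, FuzzyCompatible (M n))
    -- (1) a nondecreasing left-continuous lower bound for all the `s`-diameters
    (C : ℝ → ℝ) (hCmono : MonotoneOn C (Ioi 0))
    (hClc : ∀ s, 0 < s → ContinuousWithinAt C (Iio s) s)
    (hC : ∀ s, 0 < s → 0 < C s ∧ C s ≤ 1 ∧ ∀ n, C s ≤ fuzzyDiam (M n) s)
    -- (2) a uniform bound on the cover numbers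
    (N : ℝ → ℝ → ℕ)
    (hcov : ∀ ε t : ℝ, 0 < t → 0 < ε → ε < 1 → ∀ n, CovLE (M n) ε t (N ε t))
    -- (3) compatible `(t,ε)`-nets
    (hnets : ∀ t ε : ℝ, 0 < t → 0 < ε → ε < 1 →
      ∃ x : ∀ n, Fin (N ε t) → X n,
        (∀ n, ∀ p : X n, ∃ i, 1 - ε < M n p (x n i) t) ∧
        (∀ n m, ∀ s, t < s → ∀ i j,
          M n (x n i) (x n j) s < M m (x m i) (x m j) s →
          M n (x n i) (x n j) t / M m (x m i) (x m j) t ≤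
            M n (x n i) (x n j) s / M m (x m i) (x m j) s)) :
    (∀ t ε : ℝ, 0 < t → 0 < ε → ε < 1 →
      ∃ φ : ℕ → ℕ, StrictMono φ ∧
        ∀ j k, (1 - ε) * (1 - ε) < MGH (fun a b : ℝ => a * b) (M (φ j)) (M (φ k)) t) ∧
    (∃ φ : ℕ → ℕ, StrictMono φ ∧
      ∀ t ε : ℝ, 0 < t → 0 < ε → ε < 1 →
        ∃ k0 : ℕ, ∀ j k, k0 ≤ j → k0 ≤ k →
          1 - ε < MGH (fun a b : ℝ => a * b) (M (φ j)) (M (φ k)) t) := by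
  have key := fun (t ε : ℝ) ht hε hε1 g =>
    key_lemma X M hM C hC N hnets t ε ht hε hε1 g
  constructor
  · intro t ε ht hε hε1
    obtain ⟨φ, hφ, hb⟩ := key t ε ht hε hε1 id
    exact ⟨φ, hφ, hb⟩
  · set T : ℕ → ℝ := fun k => 1 / (k + 1) with hTdef
    set E : ℕ → ℝ := fun k => 1 / (k + 2) with hEdef
    have hT : ∀ k : ℕ, 0 < T k := fun k => by positivity
    have hE0 : ∀ k : ℕ, 0 < E k := fun k => by positivity
    have hE1 : ∀ k : ℕ, E k < 1 := by
      intro k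
      simp only [hEdef]
      rw [div_lt_one (by positivity)]
      have : (0:ℝ) ≤ (k:ℝ) := Nat.cast_nonneg k
      linarith
    have hstep : ∀ (k : ℕ) (g : ℕ → ℕ), StrictMono g →
        ∃ g' : ℕ → ℕ, (∃ ψ : ℕ → ℕ, StrictMono ψ ∧ g' = g ∘ ψ) ∧
          ∀ j l, (1 - E k) * (1 - E k) <
            MGH (fun a b : ℝ => a * b) (M (g' j)) (M (g' l)) (T k) := by
      intro k g hg
      obtain ⟨ψ, hψ, hb⟩ := key (T k) (E k) (hT k) (hE0 k) (hE1 k) g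
      exact ⟨g ∘ ψ, ⟨ψ, hψ, rfl⟩, hb⟩
    choose F hF using hstep
    have hFmono : ∀ (k : ℕ) (g : ℕ → ℕ) (hg : StrictMono g), StrictMono (F k g hg) := by
      intro k g hg
      obtain ⟨ψ, hψ, hEq⟩ := (hF k g hg).1
      rw [hEq]
      exact hg.comp hψ
    let Gs : ℕ → {f : ℕ → ℕ // StrictMono f} := fun k => Nat.rec
      ⟨F 0 id strictMono_id, hFmono 0 id strictMono_id⟩
      (fun k ih => ⟨F (k + 1) ih.1 ih.2, hFmono _ _ _⟩) k
    have hGsucc : ∀ k : ℕ, (Gs (k + 1)).1 = F (k + 1) (Gs k).1 (Gs k).2 := fun k => rfl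
    have hGbound : ∀ k : ℕ, ∀ j l,
        (1 - E k) * (1 - E k) <
          MGH (fun a b : ℝ => a * b) (M ((Gs k).1 j)) (M ((Gs k).1 l)) (T k) := by
      intro k
      cases k with
      | zero => exact (hF 0 id strictMono_id).2
      | succ k => exact (hF (k + 1) (Gs k).1 (Gs k).2).2
    have hcomp : ∀ k j : ℕ, k ≤ j → ∀ idx : ℕ, ∃ a : ℕ, (Gs j).1 idx = (Gs k).1 a := by
      intro k j hkj
      induction j, hkj using Nat.le_induction with
      | base => exact fun idx => ⟨idx, rfl⟩
      | succ j hkj ih =>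
        intro idx
        obtain ⟨ψ, hψ, hEq⟩ := (hF (j + 1) (Gs j).1 (Gs j).2).1
        obtain ⟨a, ha⟩ := ih (ψ idx)
        refine ⟨a, ?_⟩
        rw [hGsucc j, hEq]
        exact ha
    set d : ℕ → ℕ := fun j => (Gs j).1 j with hddef
    have hd : StrictMono d := by
      apply strictMono_nat_of_lt_succ
      intro j
      obtain ⟨ψ, hψ, hEq⟩ := (hF (j + 1) (Gs j).1 (Gs j).2).1
      show (Gs j).1 j < (Gs (j + 1)).1 (j + 1)
      rw [hGsucc j, hEq]
      calc (Gs j).1 j < (Gs j).1 (j + 1) := (Gs j).2 (lt_add_one j)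
        _ ≤ (Gs j).1 (ψ (j + 1)) := (Gs j).2.monotone hψ.le_apply
    refine ⟨d, hd, ?_⟩
    intro t ε ht hε hε1
    obtain ⟨n1, hn1⟩ := exists_nat_ge (1 / t)
    obtain ⟨n2, hn2⟩ := exists_nat_ge (2 / ε)
    refine ⟨max n1 n2, fun j l hj hl => ?_⟩
    set k0 := max n1 n2 with hk0def
    obtain ⟨a, ha⟩ := hcomp k0 j hj j
    obtain ⟨b, hb⟩ := hcomp k0 l hl l
    have hbound := hGbound k0 a b
    rw [← ha, ← hb] at hbound
    have hk0n1 : (n1:ℝ) ≤ (k0:ℝ) := Nat.cast_le.mpr (le_max_left n1 n2)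
    have hk0n2 : (n2:ℝ) ≤ (k0:ℝ) := Nat.cast_le.mpr (le_max_right n1 n2)
    have hTk : T k0 ≤ t := by
      simp only [hTdef]
      have h1 : 1 ≤ (n1:ℝ) * t := by
        have := (div_le_iff₀ ht).mp hn1
        linarith
      rw [div_le_iff₀ (by positivity)]
      nlinarith [ht.le]
    have hEk : 2 * E k0 ≤ ε := by
      simp only [hEdef]
      have h2 : 2 ≤ (n2:ℝ) * ε := by
        have := (div_le_iff₀ hε).mp hn2
        linarith
      have hpos : (0:ℝ) < (k0:ℝ) + 2 := by positivity
      rw [show (2:ℝ) * (1 / ((k0:ℝ) + 2)) = 2 / ((k0:ℝ) + 2) by ring]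
      rw [div_le_iff₀ hpos]
      nlinarith [hε.le]
    have hmgh := MGH_mono (MX := M (d j)) (MY := M (d l)) (hT k0) hTk
    have hfinal : 1 - ε ≤ (1 - E k0) * (1 - E k0) := by
      nlinarith [hE0 k0]
    calc 1 - ε ≤ (1 - E k0) * (1 - E k0) := hfinal
      _ < MGH (fun a b : ℝ => a * b) (M (d j)) (M (d l)) (T k0) := hbound
      _ ≤ MGH (fun a b : ℝ => a * b) (M (d j)) (M (d l)) t := hmgh
end

section
/- Let {(X_n, M_n, ∗)}_{n∈ℕ} be a sequence of nonempty compact non-Archimedean fuzzy metric spaces satisfying: (1) the continuous t-norm ∗ satisfies property (TN1): a − a∗b ≥ a∗(1−b) for all a,b ∈ [0,1], and each (M_n, ∗) is stationary, i.e., M_n(x,y,t) does not depend on t > 0; (2) there exists a constant C > 0 with C ≤ diam(X_n) for all n, where diam(X_n) = inf{ M_n(x,y) : x,y ∈ X_n }; (3) for every 0 < ε < 1 there exists N(ε) ∈ ℕ with cov(X_n, ε) ≤ N(ε) for all n. Then for every 0 < ε < 1 there exists a subsequence {X_{n_k}} such that M_GH(X_{n_j}, X_{n_k}) > (1−ε)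 ∗ (1−ε) for all j,k ∈ ℕ; consequently the sequence has a Cauchy subsequence with respect to M_GH. -/
open Set

universe u

/-!
Fix `ε > 0`, pick `η` with `1 - ε < (1 - η) ∗ (1 - η)` and put `γ = 1 - η`. Each `X n` has an
`η`-net of `N η` points, and the matrices of fuzzy distances between net points lie in a compact
cube, so along a subsequence any two of them differ entrywise by less than any given `θ > 0`.
(TN1) excludes idempotents in `(0, 1)`, hence `s - γ ∗ s` is positive on `[C, 1]` and bounded
below there by some `θ > 0`; entrywise `θ`-closeness then gives `γ ∗ d_m(B i, B l) ≤ d_n(A i, A l)`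
and symmetrically. Two such spaces are glued along their nets by the cross distance
`D x y = max_i d(x, A i) ∗ γ ∗ d(B i, y)`, an admissible stationary fuzzy metric on `X ⊕ Y` in
which the spaces are `(1 - η) ∗ γ`-close, so `M_GH > 1 - ε`. A diagonal argument over
`ε = 1 / (m + 1)` yields the Cauchy subsequence.
-/
open Filter Topology

local notation "𝕀" => Icc (0:ℝ) 1

namespace IsContinuousTNorm

variable {star : ℝ → ℝ → ℝ} (h : IsContinuousTNorm star) {a b c d e x : ℝ}
include h

theorem star_le_star (ha : a ∈ 𝕀) (hb : b ∈ 𝕀) (hc : c ∈ 𝕀) (hd : d ∈ 𝕀) (hac : a ≤ c)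
    (hbd : b ≤ d) : star a b ≤ star c d :=
  h.mono a b c d ha hb hc hd hac hbd

theorem star_le_star_left (ha : a ∈ 𝕀) (hb : b ∈ 𝕀) (hc : c ∈ 𝕀) (hbc : b ≤ c) :
    star a b ≤ star a c :=
  h.mono a b a c ha hb ha hc le_rfl hbc

theorem star_le_star_right (ha : a ∈ 𝕀) (hb : b ∈ 𝕀) (hc : c ∈ 𝕀) (hbc : b ≤ c) :
    star b a ≤ star c a :=
  h.mono b a c a hb ha hc ha hbc le_rfl

theorem star_le_left (ha : a ∈ 𝕀) (hb : b ∈ 𝕀) : star a b ≤ a := by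
  simpa [h.one a ha] using h.star_le_star_left ha hb ⟨zero_le_one, le_rfl⟩ hb.2

theorem star_le_right (ha : a ∈ 𝕀) (hb : b ∈ 𝕀) : star a b ≤ b := by
  rw [h.comm a ha b hb]
  exact h.star_le_left hb ha

theorem one_star (ha : a ∈ 𝕀) : star 1 a = a := by
  rw [h.comm 1 ⟨zero_le_one, le_rfl⟩ a ha, h.one a ha]

theorem star_zero (ha : a ∈ 𝕀) : star a 0 = 0 :=
  le_antisymm (h.star_le_right ha ⟨le_rfl, zero_le_one⟩) (h.mem a ha 0 ⟨le_rfl, zero_le_one⟩).1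

theorem star_left_comm (ha : a ∈ 𝕀) (hb : b ∈ 𝕀) (hc : c ∈ 𝕀) :
    star a (star b c) = star b (star a c) := by
  rw [← h.assoc a ha b hb c hc, h.comm a ha b hb, h.assoc b hb a ha c hc]

theorem star_star_star_comm (ha : a ∈ 𝕀) (hb : b ∈ 𝕀) (hc : c ∈ 𝕀) (hd : d ∈ 𝕀) :
    star (star a b) (star c d) = star (star a c) (star b d) := by
  rw [h.assoc a ha b hb _ (h.mem c hc d hd), h.star_left_comm hb hc hd,
    ← h.assoc a ha c hc _ (h.mem b hb d hd)]

theorem continuousOn_star_left (ha : a ∈ 𝕀) : ContinuousOn (star a) 𝕀 :=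
  h.continuous.comp (f := fun x => (a, x)) (by fun_prop) fun _ hx => ⟨ha, hx⟩

theorem continuousOn_star_right (hb : b ∈ 𝕀) : ContinuousOn (star · b) 𝕀 :=
  h.continuous.comp (f := fun x => (x, b)) (by fun_prop) fun _ hx => ⟨hx, hb⟩

theorem star_eq_of_idem (he : e ∈ 𝕀) (hee : star e e = e) (hx : x ∈ Icc 0 e) :
    star e x = x := by
  obtain ⟨z, hz, rfl⟩ : ∃ z ∈ 𝕀, star e z = x := by
    have := intermediate_value_Icc zero_le_one (h.continuousOn_star_left he)
    rw [h.star_zero he, h.one e he] at this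
    exact this hx
  rw [← h.assoc e he e he z hz, hee]

theorem min_le_star_of_idem (he : e ∈ 𝕀) (hee : star e e = e) (hx : x ∈ 𝕀) :
    min e x ≤ star e x := by
  rcases le_total e x with hex | hxe
  · simpa [hex, hee] using h.star_le_star_left he he hx hex
  · simp [hxe, h.star_eq_of_idem he hee ⟨hx.1, hxe⟩]

/-- The idempotent is the least `a ∈ [0, 1]` with `a ∗ b = b`. -/
theorem exists_idem_mem_Icc (hc : c ∈ 𝕀) (hb : b ∈ 𝕀) (hcb : star c b = b) :
    ∃ e ∈ Icc b c, star e e = e := by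
  set S := 𝕀 ∩ (star · b) ⁻¹' {b}
  have hS : IsCompact S := isCompact_Icc.of_isClosed_subset
    ((h.continuousOn_star_right hb).preimage_isClosed_of_isClosed isClosed_Icc isClosed_singleton)
    inter_subset_left
  obtain ⟨he, heb : star (sInf S) b = b⟩ := hS.sInf_mem ⟨c, hc, hcb⟩
  have hee_mem : star (sInf S) (sInf S) ∈ S :=
    ⟨h.mem _ he _ he, by
      simp only [mem_preimage, mem_singleton_iff, h.assoc _ he _ he b hb, heb]⟩
  refine ⟨sInf S, ⟨heb ▸ h.star_le_left he hb, csInf_le hS.bddBelow ⟨hc, hcb⟩⟩,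
    le_antisymm (h.star_le_left he he) (csInf_le hS.bddBelow hee_mem)⟩

theorem exists_lt_star_one_sub_self {c : ℝ} (hc : c < 1) :
    ∃ η ∈ Ioo (0:ℝ) 1, c < star (1 - η) (1 - η) := by
  have hmaps : MapsTo (fun η : ℝ => (1 - η, 1 - η)) (Ioo 0 1) (𝕀 ×ˢ 𝕀) := fun η hη =>
    ⟨⟨by linarith [hη.2], by linarith [hη.1]⟩, ⟨by linarith [hη.2], by linarith [hη.1]⟩⟩
  have hlim : Tendsto (fun η => star (1 - η) (1 - η)) (𝓝[>] 0) (𝓝 1) := by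
    have := ((h.continuous (1, 1) ⟨⟨zero_le_one, le_rfl⟩, ⟨zero_le_one, le_rfl⟩⟩).comp_of_eq
      (Continuous.continuousWithinAt (x := 0) (by fun_prop)) hmaps (by norm_num)).tendsto
    rw [nhdsWithin_Ioo_eq_nhdsGT zero_lt_one] at this
    simpa [Function.comp_def, h.one 1 ⟨zero_le_one, le_rfl⟩] using this
  exact ((hlim.eventually (eventually_gt_nhds hc)).and (Ioo_mem_nhdsGT zero_lt_one)).exists.imp
    fun η hη => ⟨hη.2, hη.1⟩

end IsContinuousTNorm

namespace TN1

variable {star : ℝ → ℝ → ℝ} (htn1 : TN1 star) (h : IsContinuousTNorm star) {γ s e : ℝ}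
include htn1 h

/-- (TN1) at `a = b = e` forces `e ∗ (1 - e) = 0`, whereas an idempotent has
`e ∗ x ≥ min e x`. -/
theorem star_self_ne (he : e ∈ Ioo (0:ℝ) 1) : star e e ≠ e := by
  intro hee
  have hmem : e ∈ 𝕀 := Ioo_subset_Icc_self he
  have hzero := htn1 e hmem e hmem
  rw [hee, sub_self] at hzero
  have hmin := h.min_le_star_of_idem hmem hee (x := 1 - e) ⟨by linarith [he.2], by linarith [he.1]⟩
  have hpos : 0 < min e (1 - e) := lt_min he.1 (by linarith [he.2])
  linarith

theorem star_lt (hγ : γ ∈ 𝕀) (hγ1 : γ < 1) (hs : s ∈ 𝕀) (hs0 : 0 < s) : star γ s < s := by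
  refine (h.star_le_right hγ hs).lt_of_ne fun hγs => ?_
  obtain ⟨e, he, hee⟩ := h.exists_idem_mem_Icc hγ hs hγs
  exact htn1.star_self_ne h ⟨hs0.trans_le he.1, he.2.trans_lt hγ1⟩ hee

theorem exists_pos_star_add_le (hγ : γ ∈ 𝕀) (hγ1 : γ < 1) {C : ℝ} (hC : 0 < C) :
    ∃ θ > 0, ∀ s ∈ Icc C 1, star γ s + θ ≤ s := by
  have hsub : Icc C 1 ⊆ 𝕀 := Icc_subset_Icc_left hC.le
  obtain ⟨θ, hθ, hle⟩ := isCompact_Icc.exists_forall_le' (a := 0) (f := fun s => s - star γ s)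
    (continuousOn_id.sub ((h.continuousOn_star_left hγ).mono hsub))
    fun s hs => sub_pos.2 (htn1.star_lt h hγ hγ1 (hsub hs) (hC.trans_le hs.1))
  exact ⟨θ, hθ, fun s hs => by linarith [hle s hs]⟩

end TN1

theorem IsCompact.exists_subseq_dist_lt {α : Type*} [PseudoMetricSpace α] {s : Set α}
    (hs : IsCompact s) {u : ℕ → α} (hu : ∀ n, u n ∈ s) {θ : ℝ} (hθ : 0 < θ) :
    ∃ φ : ℕ → ℕ, StrictMono φ ∧ ∀ j k, dist (u (φ j)) (u (φ k)) < θ := by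
  obtain ⟨_, -, φ, hφ, hlim⟩ := hs.tendsto_subseq hu
  obtain ⟨n₀, hn₀⟩ := Metric.cauchySeq_iff.1 hlim.cauchySeq θ hθ
  exact ⟨fun n => φ (n + n₀), hφ.comp (strictMono_id.add_const n₀),
    fun j k => hn₀ _ (Nat.le_add_left n₀ j) _ (Nat.le_add_left n₀ k)⟩

theorem CovLE.exists_fin_cover {X : Type*} [Nonempty X] {M : X → X → ℝ → ℝ} {ε t : ℝ} {N : ℕ}
    (hcov : CovLE M ε t N) : ∃ A : Fin N → X, ∀ x, ∃ i, 1 - ε < M (A i) x t := by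
  classical
  obtain ⟨S, hS, hcover⟩ := hcov
  refine ⟨fun i => if hi : (i : ℕ) < S.card then (S.equivFin.symm ⟨i, hi⟩ : X)
    else Classical.arbitrary X, fun x => ?_⟩
  obtain ⟨c, hc, hcx⟩ := hcover x
  refine ⟨Fin.castLE hS (S.equivFin ⟨c, hc⟩), ?_⟩
  simpa using hcx

theorem le_of_le_fuzzyDiam {X : Type*} {M : X → X → ℝ → ℝ} {s C : ℝ}
    (hM : ∀ x y, 0 ≤ M x y s) (hC : C ≤ fuzzyDiam M s) (x y : X) : C ≤ M x y s :=
  hC.trans (ciInf_le ⟨0, by rintro _ ⟨p, rfl⟩; exact hM p.1 p.2⟩ (x, y))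

section Hausdorff

variable {X Y : Type*} [Nonempty X] [Nonempty Y] {M : X ⊕ Y → X ⊕ Y → ℝ → ℝ} {t c : ℝ}

theorem le_fuzzyH (hM : ∀ p q, M p q t ≤ 1)
    (hXY : ∀ x, ∃ y, c ≤ M (.inl x) (.inr y) t) (hYX : ∀ y, ∃ x, c ≤ M (.inl x) (.inr y) t) :
    c ≤ fuzzyH M t := by
  refine le_min (le_ciInf fun x => ?_) (le_ciInf fun y => ?_)
  · obtain ⟨y, hy⟩ := hXY x
    exact le_ciSup_of_le ⟨1, by rintro _ ⟨y, rfl⟩; exact hM _ _⟩ y hy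
  · obtain ⟨x, hx⟩ := hYX y
    exact le_ciSup_of_le ⟨1, by rintro _ ⟨x, rfl⟩; exact hM _ _⟩ x hx

theorem fuzzyH_le_one_s17 (hM : ∀ p q, M p q t ∈ 𝕀) : fuzzyH M t ≤ 1 := by
  refine (min_le_left _ _).trans (ciInf_le_of_le ?_ (Classical.arbitrary X)
    (ciSup_le fun y => (hM _ _).2))
  exact ⟨0, by rintro _ ⟨x, rfl⟩; exact Real.iSup_nonneg fun y => (hM _ _).1⟩

theorem fuzzyH_le_MGH {star : ℝ → ℝ → ℝ} {MX : X → X → ℝ → ℝ} {MY : Y → Y → ℝ → ℝ}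
    (hM : IsAdmissible star MX MY M) (ht : 0 ≤ t) : fuzzyH M t ≤ MGH star MX MY t :=
  le_csSup ⟨1, by rintro _ ⟨M', hM', rfl⟩; exact fuzzyH_le_one_s17 fun p q => hM'.1.range p q t ht⟩
    ⟨M, hM, rfl⟩

end Hausdorff

/-- The constant value on `t > 0` of a stationary non-Archimedean fuzzy metric, for which
(NA) reads `d x y ∗ d y z ≤ d x z`; `stationaryFuzzy d` recovers the fuzzy metric. -/
structure IsStationaryFuzzyMetric {X : Type*} (star : ℝ → ℝ → ℝ) (d : X → X → ℝ) : Prop where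
  mem : ∀ x y, d x y ∈ 𝕀
  eq_one_iff : ∀ x y, d x y = 1 ↔ x = y
  symm : ∀ x y, d x y = d y x
  star_le : ∀ x y z, star (d x y) (d y z) ≤ d x z

noncomputable def stationaryFuzzy {X : Type*} (d : X → X → ℝ) (x y : X) (t : ℝ) : ℝ :=
  if 0 < t then d x y else 0

namespace IsStationaryFuzzyMetric

variable {star : ℝ → ℝ → ℝ} {X : Type*} {d : X → X → ℝ} (hd : IsStationaryFuzzyMetric star d)
include hd

theorem isNAFuzzyMetric : IsNAFuzzyMetric star (stationaryFuzzy d) where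
  range x y t _ := by
    unfold stationaryFuzzy
    split_ifs
    exacts [hd.mem x y, ⟨le_rfl, zero_le_one⟩]
  km1 x y := if_neg (lt_irrefl 0)
  km2 x y := by
    refine ⟨fun h1 => (hd.eq_one_iff x y).1 ?_, fun hxy t ht => ?_⟩
    · simpa [stationaryFuzzy] using h1 1 one_pos
    · simp [stationaryFuzzy, ht, (hd.eq_one_iff x y).2 hxy]
  km3 x y t := by simp only [stationaryFuzzy, hd.symm x y]
  na x y z t s ht hs := by
    simpa [stationaryFuzzy, ht, hs, lt_max_of_lt_left ht] using hd.star_le x y z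
  km5 x y t ht := continuousWithinAt_const.congr_of_eventuallyEq
    (eventually_nhdsWithin_of_eventually_nhds ((eventually_gt_nhds ht).mono fun _ hs => if_pos hs))
    (if_pos ht)

theorem star_star_le (h : IsContinuousTNorm star) (x u z v : X) :
    star (star (d x u) (d z v)) (d u v) ≤ d x z :=
  calc star (star (d x u) (d z v)) (d u v) = star (d x u) (star (d u v) (d v z)) := by
        rw [h.assoc _ (hd.mem x u) _ (hd.mem z v) _ (hd.mem u v),
          h.comm _ (hd.mem z v) _ (hd.mem u v), hd.symm z v]
    _ ≤ star (d x u) (d u z) :=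
        h.star_le_star_left (hd.mem x u) (h.mem _ (hd.mem u v) _ (hd.mem v z)) (hd.mem u z)
          (hd.star_le u v z)
    _ ≤ d x z := hd.star_le x u z

end IsStationaryFuzzyMetric

namespace IsNAFuzzyMetric

variable {star : ℝ → ℝ → ℝ} {X : Type*} {M : X → X → ℝ → ℝ} (hM : IsNAFuzzyMetric star M)
  (hst : ∀ x y : X, ∀ t s : ℝ, 0 < t → 0 < s → M x y t = M x y s)
include hM hst

theorem isStationaryFuzzyMetric : IsStationaryFuzzyMetric star (fun x y => M x y 1) where
  mem x y := hM.range x y 1 zero_le_one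
  eq_one_iff x y := ⟨fun h1 => (hM.km2 x y).1 fun t ht => (hst x y t 1 ht one_pos).trans h1,
    fun hxy => (hM.km2 x y).2 hxy 1 one_pos⟩
  symm x y := hM.km3 x y 1
  star_le x y z := by simpa using hM.na x y z 1 1 one_pos one_pos

theorem eq_stationaryFuzzy {t : ℝ} (ht : 0 ≤ t) (x y : X) :
    M x y t = stationaryFuzzy (fun x y => M x y 1) x y t := by
  rcases ht.lt_or_eq with ht | rfl
  · simp [stationaryFuzzy, ht, hst x y t 1 ht one_pos]
  · simp [stationaryFuzzy, hM.km1]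

end IsNAFuzzyMetric

section Glue

variable {star : ℝ → ℝ → ℝ} {X Y ι : Type*}

noncomputable def glueDist (star : ℝ → ℝ → ℝ) (dX : X → X → ℝ) (dY : Y → Y → ℝ) (A : ι → X)
    (B : ι → Y) (γ : ℝ) (x : X) (y : Y) : ℝ :=
  ⨆ i, star (dX x (A i)) (star γ (dY (B i) y))

noncomputable def glueSum (star : ℝ → ℝ → ℝ) (dX : X → X → ℝ) (dY : Y → Y → ℝ) (A : ι → X)
    (B : ι → Y) (γ : ℝ) : X ⊕ Y → X ⊕ Y → ℝ
  | .inl x, .inl x' => dX x x'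
  | .inl x, .inr y => glueDist star dX dY A B γ x y
  | .inr y, .inl x => glueDist star dX dY A B γ x y
  | .inr y, .inr y' => dY y y'

theorem glueDist_swap {dX : X → X → ℝ} {dY : Y → Y → ℝ} {A : ι → X} {B : ι → Y} {γ : ℝ}
    (h : IsContinuousTNorm star) (hX : IsStationaryFuzzyMetric star dX)
    (hY : IsStationaryFuzzyMetric star dY) (hγ : γ ∈ 𝕀) (x : X) (y : Y) :
    glueDist star dY dX B A γ y x = glueDist star dX dY A B γ x y := by
  refine iSup_congr fun i => ?_
  rw [hY.symm, hX.symm, h.star_left_comm (hY.mem _ _) hγ (hX.mem _ _),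
    h.star_left_comm (hX.mem _ _) hγ (hY.mem _ _), h.comm _ (hY.mem _ _) _ (hX.mem _ _)]

variable [Finite ι] (star) (dX : X → X → ℝ) (dY : Y → Y → ℝ) (A : ι → X) (B : ι → Y)
  (γ : ℝ)

theorem le_glueDist (i : ι) (x : X) (y : Y) :
    star (dX x (A i)) (star γ (dY (B i) y)) ≤ glueDist star dX dY A B γ x y :=
  le_ciSup (f := fun i => star (dX x (A i)) (star γ (dY (B i) y))) (Set.finite_range _).bddAbove i

variable [Nonempty ι]

theorem exists_glueDist_eq (x : X) (y : Y) :
    ∃ i, glueDist star dX dY A B γ x y = star (dX x (A i)) (star γ (dY (B i) y)) :=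
  exists_eq_ciSup_of_finite.imp fun _ hi => hi.symm

variable {star dX dY A B γ} (h : IsContinuousTNorm star) (hX : IsStationaryFuzzyMetric star dX)
  (hY : IsStationaryFuzzyMetric star dY) (hγ : γ ∈ 𝕀)
include h hX hY hγ

theorem glueDist_mem (x : X) (y : Y) : glueDist star dX dY A B γ x y ∈ 𝕀 := by
  obtain ⟨i, hi⟩ := exists_glueDist_eq star dX dY A B γ x y
  rw [hi]
  exact h.mem _ (hX.mem _ _) _ (h.mem _ hγ _ (hY.mem _ _))

theorem glueDist_le (x : X) (y : Y) : glueDist star dX dY A B γ x y ≤ γ := by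
  obtain ⟨i, hi⟩ := exists_glueDist_eq star dX dY A B γ x y
  rw [hi]
  exact (h.star_le_right (hX.mem _ _) (h.mem _ hγ _ (hY.mem _ _))).trans
    (h.star_le_left hγ (hY.mem _ _))

theorem star_glueDist_le (x x' : X) (y : Y) :
    star (dX x x') (glueDist star dX dY A B γ x' y) ≤ glueDist star dX dY A B γ x y := by
  obtain ⟨i, hi⟩ := exists_glueDist_eq star dX dY A B γ x' y
  have hγY := h.mem _ hγ _ (hY.mem (B i) y)
  calc star (dX x x') (glueDist star dX dY A B γ x' y)
      = star (star (dX x x') (dX x' (A i))) (star γ (dY (B i) y)) := by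
        rw [hi, h.assoc _ (hX.mem _ _) _ (hX.mem _ _) _ hγY]
    _ ≤ star (dX x (A i)) (star γ (dY (B i) y)) :=
        h.star_le_star_right hγY (h.mem _ (hX.mem _ _) _ (hX.mem _ _)) (hX.mem _ _)
          (hX.star_le _ _ _)
    _ ≤ glueDist star dX dY A B γ x y := le_glueDist star dX dY A B γ i x y

theorem glueDist_star_glueDist_le_left (hP : ∀ i l, star γ (dY (B i) (B l)) ≤ dX (A i) (A l))
    (x z : X) (y : Y) :
    star (glueDist star dX dY A B γ x y) (glueDist star dX dY A B γ z y) ≤ dX x z := by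
  obtain ⟨i, hi⟩ := exists_glueDist_eq star dX dY A B γ x y
  obtain ⟨l, hl⟩ := exists_glueDist_eq star dX dY A B γ z y
  have hbb' := h.mem _ (hY.mem (B i) y) _ (hY.mem (B l) y)
  have hnets : star (star γ (dY (B i) y)) (star γ (dY (B l) y)) ≤ dX (A i) (A l) :=
    calc star (star γ (dY (B i) y)) (star γ (dY (B l) y))
        = star (star γ γ) (star (dY (B i) y) (dY (B l) y)) :=
          h.star_star_star_comm hγ (hY.mem _ _) hγ (hY.mem _ _)
      _ ≤ star γ (dY (B i) (B l)) :=
          h.star_le_star (h.mem _ hγ _ hγ) hbb' hγ (hY.mem _ _) (h.star_le_left hγ hγ)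
            (by simpa only [hY.symm y (B l)] using hY.star_le (B i) y (B l))
      _ ≤ dX (A i) (A l) := hP i l
  calc star (glueDist star dX dY A B γ x y) (glueDist star dX dY A B γ z y)
      = star (star (dX x (A i)) (dX z (A l)))
          (star (star γ (dY (B i) y)) (star γ (dY (B l) y))) := by
        rw [hi, hl, h.star_star_star_comm (hX.mem _ _) (h.mem _ hγ _ (hY.mem _ _)) (hX.mem _ _)
          (h.mem _ hγ _ (hY.mem _ _))]
    _ ≤ star (star (dX x (A i)) (dX z (A l))) (dX (A i) (A l)) :=
        h.star_le_star_left (h.mem _ (hX.mem _ _) _ (hX.mem _ _))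
          (h.mem _ (h.mem _ hγ _ (hY.mem _ _)) _ (h.mem _ hγ _ (hY.mem _ _))) (hX.mem _ _) hnets
    _ ≤ dX x z := hX.star_star_le h x (A i) z (A l)

theorem glueDist_star_le (x : X) (y y' : Y) :
    star (glueDist star dX dY A B γ x y') (dY y' y) ≤ glueDist star dX dY A B γ x y := by
  rw [h.comm _ (glueDist_mem h hX hY hγ x y') _ (hY.mem _ _), hY.symm y' y,
    ← glueDist_swap h hX hY hγ, ← glueDist_swap h hX hY hγ]
  exact star_glueDist_le h hY hX hγ y y' x

theorem glueDist_star_glueDist_le_right (hP : ∀ i l, star γ (dX (A i) (A l)) ≤ dY (B i) (B l))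
    (x : X) (y y' : Y) :
    star (glueDist star dX dY A B γ x y) (glueDist star dX dY A B γ x y') ≤ dY y y' := by
  rw [← glueDist_swap h hX hY hγ, ← glueDist_swap h hX hY hγ]
  exact glueDist_star_glueDist_le_left h hY hX hγ hP y y' x

theorem isStationaryFuzzyMetric_glueSum (hγ1 : γ < 1)
    (hP₁ : ∀ i l, star γ (dY (B i) (B l)) ≤ dX (A i) (A l))
    (hP₂ : ∀ i l, star γ (dX (A i) (A l)) ≤ dY (B i) (B l)) :
    IsStationaryFuzzyMetric star (glueSum star dX dY A B γ) where
  mem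
    | .inl _, .inl _ => hX.mem _ _
    | .inl _, .inr _ => glueDist_mem h hX hY hγ _ _
    | .inr _, .inl _ => glueDist_mem h hX hY hγ _ _
    | .inr _, .inr _ => hY.mem _ _
  eq_one_iff
    | .inl x, .inl x' => (hX.eq_one_iff x x').trans Sum.inl_injective.eq_iff.symm
    | .inl x, .inr y => iff_of_false (glueDist_le h hX hY hγ x y |>.trans_lt hγ1).ne Sum.inl_ne_inr
    | .inr y, .inl x => iff_of_false (glueDist_le h hX hY hγ x y |>.trans_lt hγ1).ne Sum.inr_ne_inl
    | .inr y, .inr y' => (hY.eq_one_iff y y').trans Sum.inr_injective.eq_iff.symm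
  symm
    | .inl x, .inl x' => hX.symm x x'
    | .inl _, .inr _ => rfl
    | .inr _, .inl _ => rfl
    | .inr y, .inr y' => hY.symm y y'
  star_le
    | .inl x, .inl x', .inl x'' => hX.star_le x x' x''
    | .inl x, .inl x', .inr y => star_glueDist_le h hX hY hγ x x' y
    | .inl x, .inr y, .inl x' => glueDist_star_glueDist_le_left h hX hY hγ hP₁ x x' y
    | .inl x, .inr y, .inr y' => glueDist_star_le h hX hY hγ x y' y
    | .inr y, .inl x, .inl x' => by
        simp only [glueSum]
        rw [h.comm _ (glueDist_mem h hX hY hγ x y) _ (hX.mem x x'), hX.symm]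
        exact star_glueDist_le h hX hY hγ x' x y
    | .inr y, .inl x, .inr y' => glueDist_star_glueDist_le_right h hX hY hγ hP₂ x y y'
    | .inr y, .inr y', .inl x => by
        simp only [glueSum]
        rw [h.comm _ (hY.mem y y') _ (glueDist_mem h hX hY hγ x y'), hY.symm]
        exact glueDist_star_le h hX hY hγ x y y'
    | .inr y, .inr y', .inr y'' => hY.star_le y y' y''

end Glue

theorem star_le_MGH_of_nets {star : ℝ → ℝ → ℝ} (h : IsContinuousTNorm star)
    {X Y ι : Type*} [Nonempty X] [Nonempty Y] [Finite ι]
    {MX : X → X → ℝ → ℝ} {MY : Y → Y → ℝ → ℝ}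
    (hMX : IsNAFuzzyMetric star MX) (hMY : IsNAFuzzyMetric star MY)
    (hstX : ∀ x y : X, ∀ t s : ℝ, 0 < t → 0 < s → MX x y t = MX x y s)
    (hstY : ∀ x y : Y, ∀ t s : ℝ, 0 < t → 0 < s → MY x y t = MY x y s)
    {A : ι → X} {B : ι → Y} {r γ : ℝ} (hr : r ∈ 𝕀) (hγ : γ ∈ 𝕀) (hγ1 : γ < 1)
    (hA : ∀ x, ∃ i, r < MX (A i) x 1) (hB : ∀ y, ∃ i, r < MY (B i) y 1)
    (hP₁ : ∀ i l, star γ (MY (B i) (B l) 1) ≤ MX (A i) (A l) 1)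
    (hP₂ : ∀ i l, star γ (MX (A i) (A l) 1) ≤ MY (B i) (B l) 1) {t : ℝ} (ht : 0 < t) :
    star r γ ≤ MGH star MX MY t := by
  have : Nonempty ι := ⟨(hA (Classical.arbitrary X)).choose⟩
  have hX := hMX.isStationaryFuzzyMetric hstX
  have hY := hMY.isStationaryFuzzyMetric hstY
  set dX := fun x y => MX x y 1
  set dY := fun x y => MY x y 1
  have hglue := (isStationaryFuzzyMetric_glueSum h hX hY hγ hγ1 hP₁ hP₂).isNAFuzzyMetric
  have hadm : IsAdmissible star MX MY (stationaryFuzzy (glueSum star dX dY A B γ)) :=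
    ⟨hglue, fun x x' _ ht => (hMX.eq_stationaryFuzzy hstX ht x x').symm,
      fun y y' _ ht => (hMY.eq_stationaryFuzzy hstY ht y y').symm⟩
  refine le_trans ?_ (fuzzyH_le_MGH hadm ht.le)
  refine le_fuzzyH (fun p q => (hglue.range p q t ht.le).2) (fun x => ?_) (fun y => ?_)
  · obtain ⟨i, hi⟩ := hA x
    refine ⟨B i, ?_⟩
    simp only [stationaryFuzzy, if_pos ht, glueSum]
    refine le_trans ?_ (le_glueDist star dX dY A B γ i x (B i))
    rw [(hY.eq_one_iff _ _).2 rfl, h.one γ hγ, hX.symm]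
    exact h.star_le_star_right hγ hr (hX.mem _ _) hi.le
  · obtain ⟨i, hi⟩ := hB y
    refine ⟨A i, ?_⟩
    simp only [stationaryFuzzy, if_pos ht, glueSum]
    refine le_trans ?_ (le_glueDist star dX dY A B γ i (A i) y)
    rw [(hX.eq_one_iff _ _).2 rfl, h.one_star (h.mem _ hγ _ (hY.mem _ _)), h.comm r hr γ hγ]
    exact h.star_le_star_left hγ hr (hY.mem _ _) hi.le

theorem exists_subseq_one_sub_lt_MGH {star : ℝ → ℝ → ℝ} (h : IsContinuousTNorm star)
    (htn1 : TN1 star) (X : ℕ → Type u) [∀ n, Nonempty (X n)] (M : ∀ n, X n → X n → ℝ → ℝ)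
    (hM : ∀ n, IsNAFuzzyMetric star (M n))
    (hstat : ∀ n, ∀ x y : X n, ∀ t s : ℝ, 0 < t → 0 < s → M n x y t = M n x y s)
    {C : ℝ} (hC0 : 0 < C) (hC : ∀ n, C ≤ fuzzyDiam (M n) 1) {N : ℝ → ℕ}
    (hcov : ∀ ε : ℝ, 0 < ε → ε < 1 → ∀ n, CovLE (M n) ε 1 (N ε)) {ε : ℝ} (hε : 0 < ε) :
    ∃ φ : ℕ → ℕ, StrictMono φ ∧
      ∀ j k, ∀ t : ℝ, 0 < t → 1 - ε < MGH star (M (φ j)) (M (φ k)) t := by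
  obtain ⟨η, ⟨hη0, hη1⟩, hεη⟩ := h.exists_lt_star_one_sub_self (by linarith : 1 - ε < 1)
  have hγ : 1 - η ∈ 𝕀 := ⟨by linarith, by linarith⟩
  obtain ⟨θ, hθ0, hθ⟩ := htn1.exists_pos_star_add_le h hγ (by linarith) hC0
  choose A hA using fun n => (hcov η hη0 hη1 n).exists_fin_cover
  obtain ⟨φ, hφ, hclose⟩ := (isCompact_univ_pi fun _ => isCompact_Icc).exists_subseq_dist_lt
    (u := fun n (p : Fin (N η) × Fin (N η)) => M n (A n p.1) (A n p.2) 1)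
    (fun n => mem_univ_pi.2 fun _ => (hM n).range _ _ 1 zero_le_one) hθ0
  have hP : ∀ j k i l, star (1 - η) (M (φ k) (A (φ k) i) (A (φ k) l) 1) ≤
      M (φ j) (A (φ j) i) (A (φ j) l) 1 := by
    intro j k i l
    have hdiam := hθ (M (φ k) (A (φ k) i) (A (φ k) l) 1)
      ⟨le_of_le_fuzzyDiam (fun x y => ((hM _).range x y 1 zero_le_one).1) (hC (φ k)) _ _,
        ((hM _).range _ _ 1 zero_le_one).2⟩
    have hdist := (dist_le_pi_dist _ _ (i, l)).trans_lt (hclose j k)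
    rw [Real.dist_eq, abs_lt] at hdist
    linarith
  refine ⟨φ, hφ, fun j k t ht => hεη.trans_le ?_⟩
  exact star_le_MGH_of_nets h (hM _) (hM _) (hstat _) (hstat _) hγ hγ (by linarith)
    (hA (φ j)) (hA (φ k)) (hP j k · ·) (hP k j · ·) ht

theorem exists_diagonal_subseq {R : ℕ → ℕ → ℕ → Prop}
    (h : ∀ m (ψ : ℕ → ℕ), ∃ φ : ℕ → ℕ, StrictMono φ ∧ ∀ j k, R m (ψ (φ j)) (ψ (φ k))) :
    ∃ φ : ℕ → ℕ, StrictMono φ ∧ ∀ m, ∃ k₀, ∀ j k, k₀ ≤ j → k₀ ≤ k → R m (φ j) (φ k) := by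
  choose φ hφ hR using h
  obtain ⟨ψ, hψ_zero, hψ_succ⟩ : ∃ ψ : ℕ → ℕ → ℕ, ψ 0 = id ∧ ∀ m, ψ (m + 1) = ψ m ∘ φ m (ψ m) :=
    ⟨fun m => Nat.rec id (fun m f => f ∘ φ m f) m, rfl, fun _ => rfl⟩
  have hψ_mono : ∀ m, StrictMono (ψ m) := by
    intro m
    induction m with
    | zero => exact hψ_zero ▸ strictMono_id
    | succ m ih => exact hψ_succ m ▸ ih.comp (hφ m (ψ m))
  have hψ_sub : ∀ m i, m ≤ i → ∃ g : ℕ → ℕ, ψ i = ψ m ∘ g := by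
    intro m i hmi
    induction i, hmi using Nat.le_induction with
    | base => exact ⟨id, rfl⟩
    | succ i _ ih =>
      obtain ⟨g, hg⟩ := ih
      exact ⟨g ∘ φ i (ψ i), by rw [hψ_succ, hg]; rfl⟩
  refine ⟨fun j => ψ (j + 1) j, strictMono_nat_of_lt_succ fun j => ?_, fun m => ⟨m, ?_⟩⟩
  · calc ψ (j + 1) j < ψ (j + 1) (j + 1) := hψ_mono (j + 1) (Nat.lt_succ_self j)
      _ ≤ ψ (j + 1) (φ (j + 1) (ψ (j + 1)) (j + 1)) :=
          (hψ_mono (j + 1)).monotone (hφ _ _).le_apply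
      _ = ψ (j + 2) (j + 1) := by rw [hψ_succ (j + 1)]; rfl
  · intro j k hj hk
    obtain ⟨g, hg⟩ := hψ_sub (m + 1) (j + 1) (by omega)
    obtain ⟨g', hg'⟩ := hψ_sub (m + 1) (k + 1) (by omega)
    simp only [hg, hg', hψ_succ, Function.comp_apply]
    exact hR m (ψ m) (g j) (g' k)

theorem fuzzy_precompactness_stationary_general (star : ℝ → ℝ → ℝ) (hstar : IsContinuousTNorm star)
    (X : ℕ → Type u) [∀ n, Nonempty (X n)]
    (M : ∀ n, X n → X n → ℝ → ℝ)
    (hM : ∀ n, IsNAFuzzyMetric star (M n))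
    -- (1) (TN1) and stationarity
    (htn1 : TN1 star)
    (hstat : ∀ n, ∀ x y : X n, ∀ t s : ℝ, 0 < t → 0 < s → M n x y t = M n x y s)
    -- (2) a uniform positive lower bound for the diameters
    (C : ℝ) (hC0 : 0 < C) (hC : ∀ n, C ≤ fuzzyDiam (M n) 1)
    -- (3) a uniform bound on the cover numbers
    (N : ℝ → ℕ)
    (hcov : ∀ ε : ℝ, 0 < ε → ε < 1 → ∀ n, CovLE (M n) ε 1 (N ε)) :
    (∀ ε : ℝ, 0 < ε → ε < 1 →
      ∃ φ : ℕ → ℕ, StrictMono φ ∧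
        ∀ j k, ∀ t : ℝ, 0 < t →
          star (1 - ε) (1 - ε) < MGH star (M (φ j)) (M (φ k)) t) ∧
    (∃ φ : ℕ → ℕ, StrictMono φ ∧
      ∀ t ε : ℝ, 0 < t → 0 < ε → ε < 1 →
        ∃ k0 : ℕ, ∀ j k, k0 ≤ j → k0 ≤ k →
          1 - ε < MGH star (M (φ j)) (M (φ k)) t) := by
  have key : ∀ (ψ : ℕ → ℕ) {ε : ℝ}, 0 < ε → ∃ φ : ℕ → ℕ, StrictMono φ ∧
      ∀ j k, ∀ t : ℝ, 0 < t → 1 - ε < MGH star (M (ψ (φ j))) (M (ψ (φ k))) t :=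
    fun ψ _ hε => exists_subseq_one_sub_lt_MGH hstar htn1 (fun n => X (ψ n)) (fun n => M (ψ n))
      (fun n => hM (ψ n)) (fun n => hstat (ψ n)) hC0 (fun n => hC (ψ n))
      (fun ε h0 h1 n => hcov ε h0 h1 (ψ n)) hε
  refine ⟨fun ε hε0 hε1 => ?_, ?_⟩
  · obtain ⟨φ, hφ, hlt⟩ := key id hε0
    have h1ε : 1 - ε ∈ 𝕀 := ⟨by linarith, by linarith⟩
    exact ⟨φ, hφ, fun j k t ht => (hstar.star_le_left h1ε h1ε).trans_lt (hlt j k t ht)⟩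
  · obtain ⟨φ, hφ, hcauchy⟩ := exists_diagonal_subseq
      (R := fun m a b => ∀ t : ℝ, 0 < t → 1 - 1 / (m + 1) < MGH star (M a) (M b) t)
      fun _ ψ => key ψ Nat.one_div_pos_of_nat
    refine ⟨φ, hφ, fun t ε ht hε0 _ => ?_⟩
    obtain ⟨m, hm⟩ := exists_nat_one_div_lt hε0
    obtain ⟨k₀, hk₀⟩ := hcauchy m
    exact ⟨k₀, fun j k hj hk => (by linarith : 1 - ε < 1 - 1 / (m + 1)).trans (hk₀ j k hj hk t ht)⟩

/-- Theorem `th:mainStat`: for stationary fuzzy metrics with a t-norm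
satisfying (TN1), a uniform positive lower bound on the diameters and a uniform bound
on the cover numbers give, for every `0 < ε < 1`, a subsequence pairwise
`(1-ε) ∗ (1-ε)`-close in `M_GH`; consequently a Cauchy subsequence exists. -/
theorem fuzzy_precompactness_stationary (star : ℝ → ℝ → ℝ) (hstar : IsContinuousTNorm star)
    (X : ℕ → Type u) [∀ n, TopologicalSpace (X n)] [∀ n, CompactSpace (X n)]
    [∀ n, Nonempty (X n)]
    (M : ∀ n, X n → X n → ℝ → ℝ)
    (hM : ∀ n, IsNAFuzzyMetric star (M n)) (hcomp : ∀ n, FuzzyCompatible (M n))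
    -- (1) (TN1) and stationarity
    (htn1 : TN1 star)
    (hstat : ∀ n, ∀ x y : X n, ∀ t s : ℝ, 0 < t → 0 < s → M n x y t = M n x y s)
    -- (2) a uniform positive lower bound for the diameters
    (C : ℝ) (hC0 : 0 < C) (hC : ∀ n, C ≤ fuzzyDiam (M n) 1)
    -- (3) a uniform bound on the cover numbers
    (N : ℝ → ℕ)
    (hcov : ∀ ε : ℝ, 0 < ε → ε < 1 → ∀ n, CovLE (M n) ε 1 (N ε)) :
    (∀ ε : ℝ, 0 < ε → ε < 1 →
      ∃ φ : ℕ → ℕ, StrictMono φ ∧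
        ∀ j k, ∀ t : ℝ, 0 < t →
          star (1 - ε) (1 - ε) < MGH star (M (φ j)) (M (φ k)) t) ∧
    (∃ φ : ℕ → ℕ, StrictMono φ ∧
      ∀ t ε : ℝ, 0 < t → 0 < ε → ε < 1 →
        ∃ k0 : ℕ, ∀ j k, k0 ≤ j → k0 ≤ k →
          1 - ε < MGH star (M (φ j)) (M (φ k)) t) :=
  fuzzy_precompactness_stationary_general star hstar X M hM htn1 hstat C hC0 hC N hcov
end
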